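/- arXiv:1703.06581 — 3 statements merged into one kernel-verified Lean document; each statement's English description precedes it below -/
import Mathlib

section
/- Suppose γ_i = max(0, min(γ_k − D_i, D̄_i)) where D is a shortest-path distance from k in the network with all arcs open, and D̄ is a shortest-path distance to the nearest open facility satisfying D̄_i ≤ D̄_j + ρ_{ij} for every open arc (i,j), with γ_k = D̄_k. Then for every open arc (i,j), ρ_{ij} + γ_j − γ_i ≥ 0. -/
/-- second analytic cut, reduced-cost inequality on open arcs with
γ_i = max(0, min(γ_k − D_i, D̄_i)) and γ_k = D̄_k. -/
theorem stmt2 {N : Type*} [Fintype N]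
    (A Opn : N → N → Prop) (hOA : ∀ i j, Opn i j → A i j)
    (ρ : N → N → ℝ) (hρ : ∀ i j, 0 ≤ ρ i j)
    (k : N) (D Dbar : N → ℝ)
    (hDnn : ∀ i, 0 ≤ D i) (hDbarnn : ∀ i, 0 ≤ Dbar i)
    (hD : ∀ i j, A i j → D j ≤ D i + ρ i j)
    (hDbar : ∀ i j, Opn i j → Dbar i ≤ ρ i j + Dbar j)
    (γk : ℝ) (hγk : γk = Dbar k)
    (γ : N → ℝ) (hγ : ∀ i, γ i = max 0 (min (γk - D i) (Dbar i))) :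
    ∀ i j, Opn i j → 0 ≤ ρ i j + γ j - γ i := by
  intro i j h
  have hA := hOA i j h
  have h1 := hD i j hA
  have h2 := hDbar i j h
  have hρij := hρ i j
  rw [hγ i, hγ j]
  rcases max_cases (0:ℝ) (min (γk - D i) (Dbar i)) with ⟨he, _⟩ | ⟨he, _⟩ <;> rw [he]
  · nlinarith [le_max_left (0:ℝ) (min (γk - D j) (Dbar j))]
  · have hm : min (γk - D i) (Dbar i) ≤ ρ i j + min (γk - D j) (Dbar j) := by
      rcases le_total (γk - D j) (Dbar j) with hc | hc
      · rw [min_eq_left hc]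
        have := min_le_left (γk - D i) (Dbar i); linarith
      · rw [min_eq_right hc]
        have := min_le_right (γk - D i) (Dbar i); linarith
    nlinarith [le_max_right (0:ℝ) (min (γk - D j) (Dbar j))]
end

section
/- Validity of the lifted cover inequality: given a knapsack constraint Σ_{i∈I} g_i u_i ≤ B with g_i > 0 and u binary, if S̄ ⊆ I consists of the m cheapest items and Σ_{i∈S̄} g_i > B, then every feasible u satisfies Σ_{i∈S̄ ∪ E} u_i ≤ m − 1, where E = {i ∈ I \ S̄ : g_i ≥ max_{j∈S̄} g_j}. -/
/-- validity of the lifted cover inequality for the budget knapsack. -/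
theorem stmt10 {ι : Type*} [Fintype ι] [DecidableEq ι]
    (g : ι → ℝ) (hg : ∀ i, 0 < g i) (B : ℝ) (hB : 0 ≤ B)
    (u : ι → ℝ) (hu : ∀ i, u i = 0 ∨ u i = 1)
    (hfeas : ∑ i, g i * u i ≤ B)
    (S : Finset ι) (m : ℕ) (hm : S.card = m)
    (hcheap : ∀ i ∈ S, ∀ j, j ∉ S → g i ≤ g j)
    (hcover : B < ∑ i ∈ S, g i)
    (E : Finset ι) (hE : ∀ i, i ∈ E ↔ i ∉ S ∧ ∀ j ∈ S, g j ≤ g i) :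
    ∑ i ∈ S ∪ E, u i ≤ (m : ℝ) - 1 := by
  classical
  set T : Finset ι := (S ∪ E).filter (fun i => u i = 1) with hTdef
  have hsum : ∑ i ∈ S ∪ E, u i = (T.card : ℝ) := by
    rw [← Finset.sum_filter_add_sum_filter_not (S ∪ E) (fun i => u i = 1) u]
    have h1 : ∑ i ∈ (S ∪ E).filter (fun i => u i = 1), u i = (T.card : ℝ) := by
      rw [Finset.sum_congr rfl (fun i hi => (Finset.mem_filter.mp hi).2)]
      simp [hTdef]
    have h2 : ∑ i ∈ (S ∪ E).filter (fun i => ¬ u i = 1), u i = 0 := by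
      apply Finset.sum_eq_zero
      intro i hi
      rcases hu i with h | h
      · exact h
      · exact absurd h (Finset.mem_filter.mp hi).2
    rw [h1, h2]; ring
  rw [hsum]
  -- key claim: T.card < m
  have hcard : T.card < m := by
    by_contra hge
    push_neg at hge
    -- T \ S ⊆ E
    have hTS_E : T \ S ⊆ E := by
      intro i hi
      rcases Finset.mem_sdiff.mp hi with ⟨hiT, hiS⟩
      have := Finset.mem_filter.mp hiT
      rcases Finset.mem_union.mp this.1 with h | h
      · exact absurd h hiS
      · exact h
    have hcardle : (S \ T).card ≤ (T \ S).card := by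
      have h1 : (S ∩ T).card + (S \ T).card = S.card := by
        rw [Finset.card_inter_add_card_sdiff]
      have h2 : (T ∩ S).card + (T \ S).card = T.card := by
        rw [Finset.card_inter_add_card_sdiff]
      rw [Finset.inter_comm] at h1
      omega
    -- Σ_{S\T} g ≤ Σ_{T\S} g
    have hkey : ∑ i ∈ S \ T, g i ≤ ∑ i ∈ T \ S, g i := by
      rcases Finset.eq_empty_or_nonempty (T \ S) with he | hne
      · have hc0 : (T \ S).card = 0 := by simp [he]
        have : (S \ T).card = 0 := by omega
        rw [Finset.card_eq_zero] at this
        rw [this, he]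
      · obtain ⟨b, hbmem, hbmin⟩ := Finset.exists_min_image (T \ S) g hne
        have hbE : b ∈ E := hTS_E hbmem
        have hub : ∀ a ∈ S \ T, g a ≤ g b := fun a ha =>
          ((hE b).mp hbE).2 a (Finset.mem_sdiff.mp ha).1
        have h1 : ∑ i ∈ S \ T, g i ≤ (S \ T).card • g b :=
          Finset.sum_le_card_nsmul _ _ _ hub
        have h2 : (T \ S).card • g b ≤ ∑ i ∈ T \ S, g i :=
          Finset.card_nsmul_le_sum _ _ _ hbmin
        have h3 : (S \ T).card • g b ≤ (T \ S).card • g b := by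
          apply nsmul_le_nsmul_left (hg b).le hcardle
        linarith
    have hST : ∑ i ∈ S, g i ≤ ∑ i ∈ T, g i := by
      calc ∑ i ∈ S, g i = ∑ i ∈ S ∩ T, g i + ∑ i ∈ S \ T, g i := by
            rw [Finset.sum_inter_add_sum_sdiff]
        _ ≤ ∑ i ∈ S ∩ T, g i + ∑ i ∈ T \ S, g i := by linarith [hkey]
        _ = ∑ i ∈ T ∩ S, g i + ∑ i ∈ T \ S, g i := by rw [Finset.inter_comm]
        _ = ∑ i ∈ T, g i := by rw [Finset.sum_inter_add_sum_sdiff]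
    have hTle : ∑ i ∈ T, g i ≤ ∑ i, g i * u i := by
      have h1 : ∑ i ∈ T, g i = ∑ i ∈ T, g i * u i := by
        apply Finset.sum_congr rfl
        intro i hi
        rw [(Finset.mem_filter.mp hi).2, mul_one]
      rw [h1]
      apply Finset.sum_le_sum_of_subset_of_nonneg (Finset.subset_univ T)
      intro i _ _
      rcases hu i with h | h
      · simp [h]
      · simp [h]; exact (hg i).le
    linarith
  have h1 : T.card + 1 ≤ m := hcard
  have : (T.card : ℝ) + 1 ≤ (m : ℝ) := by exact_mod_cast h1
  linarith
end

section
/- The dual variables of Algorithm 2 (second analytic cut) satisfy all dual constraints: with γ_i = max(0, min(γ_k − D_i, D̄_i)) (where D is shortest distance from k with all arcs open, D̄ the shortest distance to an open facility with current open arcs, γ_k = D̄_k) and λ_{ij} = 0 on open arcs, λ_{ij} = max(0, γ_i − γ_j − ρ_{ij}) on closed arcs, we have ρ_{ij} + λ_{ij} + γ_j − γ_i ≥ 0 for every arc (i,j). -/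
/-- the dual variables of the second analytic cut satisfy all dual
constraints ρ_{ij} + λ_{ij} + γ_j − γ_i ≥ 0. -/
theorem stmt14 {N : Type*} [Fintype N]
    (A Opn : N → N → Prop) (hOA : ∀ i j, Opn i j → A i j)
    (ρ : N → N → ℝ) (hρ : ∀ i j, 0 ≤ ρ i j)
    (k : N) (W : N → ℝ) (hW : ∀ i, W i = 0 ∨ W i = 1) (hWk : W k = 0)
    (D Dbar : N → ℝ)
    (hDnn : ∀ i, 0 ≤ D i) (hDbarnn : ∀ i, 0 ≤ Dbar i)
    (hD : ∀ i j, A i j → D j ≤ D i + ρ i j)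
    (hDbar : ∀ i j, Opn i j → Dbar i ≤ ρ i j + Dbar j)
    (hDbarFac : ∀ i, W i = 1 → Dbar i = 0)
    (γk : ℝ) (hγk : γk = Dbar k)
    (γ : N → ℝ) (hγ : ∀ i, γ i = max 0 (min (γk - D i) (Dbar i)))
    (lam : N → N → ℝ)
    (hlamOpen : ∀ i j, Opn i j → lam i j = 0)
    (hlamClosed : ∀ i j, A i j → ¬ Opn i j → lam i j = max 0 (γ i - γ j - ρ i j)) :
    ∀ i j, A i j → 0 ≤ ρ i j + lam i j + γ j - γ i := by
  intro i j hA
  by_cases hO : Opn i j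
  · rw [hlamOpen i j hO]
    have hγj : γ j = max 0 (min (γk - D j) (Dbar j)) := hγ j
    have hγi : γ i = max 0 (min (γk - D i) (Dbar i)) := hγ i
    have h1 : min (γk - D i) (Dbar i) ≤ ρ i j + min (γk - D j) (Dbar j) := by
      have hd := hD i j hA
      have hb := hDbar i j hO
      rw [← min_add_add_left]
      apply le_min
      · calc min (γk - D i) (Dbar i) ≤ γk - D i := min_le_left _ _
          _ ≤ ρ i j + (γk - D j) := by linarith
      · calc min (γk - D i) (Dbar i) ≤ Dbar i := min_le_right _ _
          _ ≤ ρ i j + Dbar j := hb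
    have h2 : (0:ℝ) ≤ ρ i j + γ j := by
      have := le_max_left 0 (min (γk - D j) (Dbar j))
      have := hρ i j
      rw [hγj]; linarith
    have h3 : min (γk - D i) (Dbar i) ≤ ρ i j + γ j := by
      rw [hγj]
      calc min (γk - D i) (Dbar i) ≤ ρ i j + min (γk - D j) (Dbar j) := h1
        _ ≤ _ := by gcongr; exact le_max_right _ _
    rw [hγi]
    have := max_le h2 h3
    linarith
  · rw [hlamClosed i j hA hO]
    have := le_max_right 0 (γ i - γ j - ρ i j)
    linarith
end
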